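/- Define b : ℕ → ℤ by b(0)=1, b(1)=-1, b(2)=A, and for n ≥ 3, b(n) = -(1/2)·∑_{k=0}^{n-1} b(k)·C(n+1,k+1). Then b(2k)=0 for all k ≥ 2. -/

import Mathlib

/-!
Shift indices, c(n+1) = b(n) and c(0) = 0, and let C be the exponential generating function of c.
The recurrence says (eˣ + 1)·C(x) = D(x), where D has nonzero coefficients only in degrees 1 and 3
(degree 2 drops out because b(0) + b(1) = 0), so D is odd. Substituting -x and multiplying by eˣ gives (eˣ + 1)·C(-x) = -eˣ·D(x); subtracting,
C(x) - C(-x) = D(x). Hence the odd part of C is a cubic, and b(2k) = c(2k+1) = 0 for k ≥ 2.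
-/

open Finset PowerSeries
open scoped Nat

namespace PowerSeries

variable {K : Type*} [Field K]

def egf : (ℕ → K) →ₗ[K] K⟦X⟧ where
  toFun c := mk fun n => c n / (n ! : K)
  map_add' c d := by ext; simp [add_div]
  map_smul' a c := by ext; simp [mul_div_assoc]

@[simp]
theorem coeff_egf (c : ℕ → K) (n : ℕ) : coeff n (egf c) = c n / n ! := by
  simp [egf]

theorem evalNegHom_egf (c : ℕ → K) : evalNegHom (egf c) = egf fun n => (-1) ^ n * c n := by
  ext n
  simp [evalNegHom, coeff_rescale, mul_div_assoc]

variable [CharZero K]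

theorem egf_injective : Function.Injective (egf : (ℕ → K) → K⟦X⟧) := by
  intro c d h
  funext n
  simpa [Nat.factorial_ne_zero] using congrArg (coeff n) h

theorem exp_mul_egf (c : ℕ → K) :
    exp K * egf c = egf fun n => ∑ j ∈ range (n + 1), (n.choose j : K) * c j := by
  ext n
  rw [mul_comm, coeff_mul,
    Nat.sum_antidiagonal_eq_sum_range_succ fun i j => coeff i (egf c) * coeff j (exp K),
    coeff_egf, sum_div]
  refine sum_congr rfl fun j hj => ?_
  rw [Nat.cast_choose K (mem_range_succ_iff.mp hj), coeff_egf, coeff_exp]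
  simp only [one_div, map_inv₀, map_natCast]
  have : (n ! : K) ≠ 0 := Nat.cast_ne_zero.mpr n.factorial_ne_zero
  field_simp

end PowerSeries

theorem sub_neg_one_pow_mul_eq_of_sum_choose_add_self_eq {K : Type*} [Field K] [CharZero K]
    {c d : ℕ → K} (hc : ∀ n, ∑ j ∈ range (n + 1), (n.choose j : K) * c j + c n = d n)
    (hd : ∀ n, Even n → d n = 0) (n : ℕ) : c n - (-1) ^ n * c n = d n := by
  set E := exp K
  have hE : E * evalNegHom E = 1 := exp_mul_exp_neg_eq_one
  have hrel : (E + 1) * egf c = egf d := by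
    rw [add_mul, one_mul, exp_mul_egf, ← map_add]
    exact congrArg egf (funext hc)
  have hd_odd : evalNegHom (egf d) = -egf d := by
    ext m
    rw [evalNegHom_egf, coeff_egf, map_neg, coeff_egf]
    rcases m.even_or_odd with hm | hm
    · simp [hd m hm]
    · rw [hm.neg_one_pow, neg_one_mul, neg_div]
  have hrel_neg : (E + 1) * evalNegHom (egf c) = -(E * egf d) := by
    have := congrArg (E * evalNegHom ·) hrel
    simp only [map_mul, map_add, map_one, hd_odd] at this
    linear_combination this - evalNegHom (egf c) * hE
  have hE_ne : E + 1 ≠ 0 := fun h => by simpa [E] using congrArg constantCoeff h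
  have : egf c - evalNegHom (egf c) = egf d :=
    mul_left_cancel₀ hE_ne (by linear_combination hrel - hrel_neg)
  rw [evalNegHom_egf, ← map_sub] at this
  exact congrFun (egf_injective this) n

def prependZero {R : Type*} [Zero R] (b : ℕ → R) : ℕ → R
  | 0 => 0
  | n + 1 => b n

theorem sum_choose_mul_prependZero_add_self {R : Type*} [CommSemiring R] (b : ℕ → R) (m : ℕ) :
    ∑ j ∈ range (m + 2), ((m + 1).choose j : R) * prependZero b j + prependZero b (m + 1) =
      ∑ k ∈ range m, b k * ((m + 1).choose (k + 1) : R) + 2 * b m := by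
  rw [sum_range_succ', sum_range_succ]
  simp only [prependZero, Nat.choose_self, Nat.cast_one, mul_zero, add_zero]
  rw [sum_congr rfl fun k _ => mul_comm (b k) _]
  ring

theorem stmt_6_general (b : ℕ → ℤ)
    (h0 : b 0 = 1) (h1 : b 1 = -1)
    (hrec : ∀ n, 3 ≤ n →
      2 * b n = -∑ k ∈ Finset.range n, b k * ((n + 1).choose (k + 1) : ℤ)) :
    ∀ k, 2 ≤ k → b (2 * k) = 0 := by
  set c : ℕ → ℚ := prependZero fun n => (b n : ℚ)
  have hvanish : ∀ n, n ≠ 1 → n ≠ 3 → ∑ j ∈ range (n + 1), (n.choose j : ℚ) * c j + c n = 0 := by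
    intro n hn1 hn3
    rcases n with _ | m
    · simp [c, prependZero]
    rw [sum_choose_mul_prependZero_add_self]
    rcases (by omega : m = 1 ∨ 3 ≤ m) with rfl | hm
    · simp [h0, h1]
    · exact_mod_cast (by linarith [hrec m hm])
  intro k hk
  have hodd := sub_neg_one_pow_mul_eq_of_sum_choose_add_self_eq (fun n => rfl)
    (fun n hn => have := Nat.even_iff.mp hn; hvanish n (by omega) (by omega)) (2 * k + 1)
  rw [hvanish _ (by omega) (by omega), pow_succ, pow_mul] at hodd
  norm_num at hodd
  have : (b (2 * k) : ℚ) = 0 := hodd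
  exact_mod_cast this

theorem stmt_6 (A : ℤ) (b : ℕ → ℤ)
    (h0 : b 0 = 1) (h1 : b 1 = -1) (h2 : b 2 = A)
    (hrec : ∀ n, 3 ≤ n →
      2 * b n = -∑ k ∈ Finset.range n, b k * ((n + 1).choose (k + 1) : ℤ)) :
    ∀ k, 2 ≤ k → b (2 * k) = 0 :=
  stmt_6_general b h0 h1 hrec
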